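/- Let u : ℝ³ → ℂ be smooth and satisfy the submodel equations □u = 0 and ⟨∂u,∂u⟩ = 0. Fix an integer j ≥ 1 and define, for μ = 0,1,2, J_μ^{(j,0)} = −i√(j(j+1)) · (ū∂_μu − u∂_μū)/(1+|u|²)^{j+1} · Σ_{n=0}^{j−1} γ_n^{(j,0)} |u|^{2n}, where γ_n^{(j,0)} = (−1)^n · (1/j) · C(j,n) · C(j,n+1). Then (J₀^{(j,0)}, J₁^{(j,0)}, J₂^{(j,0)}) is a conserved current, i.e. ∂₀J₀^{(j,0)} − ∂₁J₁^{(j,0)} − ∂₂J₂^{(j,0)} = 0 on ℝ³. -/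

import Mathlib

open Complex ComplexConjugate Finset

/-- Partial derivative in direction `μ` of a complex-valued function on `ℝ³`. -/
noncomputable def pd (μ : Fin 3) (f : (Fin 3 → ℝ) → ℂ) (x : Fin 3 → ℝ) : ℂ :=
  fderiv ℝ f x (Pi.single μ 1)

/-- The d'Alembertian `□u = ∂₀∂₀u − ∂₁∂₁u − ∂₂∂₂u` for the metric `diag(1,−1,−1)`. -/
noncomputable def dalembert (u : (Fin 3 → ℝ) → ℂ) (x : Fin 3 → ℝ) : ℂ :=
  pd 0 (pd 0 u) x - pd 1 (pd 1 u) x - pd 2 (pd 2 u) x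

/-- Minkowski product of gradients `⟨∂f,∂g⟩ = ∂₀f·∂₀g − ∂₁f·∂₁g − ∂₂f·∂₂g`. -/
noncomputable def minkGrad (f g : (Fin 3 → ℝ) → ℂ) (x : Fin 3 → ℝ) : ℂ :=
  pd 0 f x * pd 0 g x - pd 1 f x * pd 1 g x - pd 2 f x * pd 2 g x

/-- `(J₀,J₁,J₂)` is a conserved current if `∂₀J₀ − ∂₁J₁ − ∂₂J₂ = 0` identically. -/
def IsConservedCurrent (J : Fin 3 → (Fin 3 → ℝ) → ℂ) : Prop :=
  ∀ x, pd 0 (J 0) x - pd 1 (J 1) x - pd 2 (J 2) x = 0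

/-- The coefficient `γ_n^{(j,0)} = (−1)^n (1/j) C(j,n) C(j,n+1)`. -/
noncomputable def gammaCoeff (j n : ℕ) : ℂ :=
  (-1) ^ n * (1 / (j : ℂ)) * (Nat.choose j n : ℂ) * (Nat.choose j (n + 1) : ℂ)

lemma pd_contDiff {u : (Fin 3 → ℝ) → ℂ} (hu : ContDiff ℝ (⊤ : ℕ∞) u) (μ : Fin 3) :
    ContDiff ℝ (⊤ : ℕ∞) (pd μ u) := by
  exact (hu.fderiv_right (m := (⊤ : ℕ∞)) (by simp)).clm_apply contDiff_const

lemma contDiff_conj {u : (Fin 3 → ℝ) → ℂ} (hu : ContDiff ℝ (⊤ : ℕ∞) u) :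
    ContDiff ℝ (⊤ : ℕ∞) (fun y => conj (u y)) :=
  Complex.conjCLE.contDiff.comp hu

lemma pd_conj {f : (Fin 3 → ℝ) → ℂ} {x} (hf : DifferentiableAt ℝ f x) (μ : Fin 3) :
    pd μ (fun y => conj (f y)) x = conj (pd μ f x) := by
  have h := (Complex.conjCLE.toContinuousLinearMap.hasFDerivAt (x := f x)).comp x hf.hasFDerivAt
  unfold pd
  rw [show (fun y => conj (f y)) = (Complex.conjCLE.toContinuousLinearMap : ℂ → ℂ) ∘ f from rfl,
    h.fderiv]
  simp

lemma pd_mul {f g : (Fin 3 → ℝ) → ℂ} {x} (hf : DifferentiableAt ℝ f x)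
    (hg : DifferentiableAt ℝ g x) (μ : Fin 3) :
    pd μ (fun y => f y * g y) x = pd μ f x * g x + f x * pd μ g x := by
  unfold pd
  rw [fderiv_fun_mul hf hg]
  simp [smul_eq_mul]
  ring

lemma pd_sub {f g : (Fin 3 → ℝ) → ℂ} {x} (hf : DifferentiableAt ℝ f x)
    (hg : DifferentiableAt ℝ g x) (μ : Fin 3) :
    pd μ (fun y => f y - g y) x = pd μ f x - pd μ g x := by
  unfold pd
  rw [fderiv_fun_sub hf hg]
  simp

lemma pd_const_mul {f : (Fin 3 → ℝ) → ℂ} {x} (hf : DifferentiableAt ℝ f x) (c : ℂ) (μ : Fin 3) :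
    pd μ (fun y => c * f y) x = c * pd μ f x := by
  unfold pd
  rw [fderiv_const_mul hf]
  simp

lemma pd_comp_deriv {g : ℂ → ℂ} {S : (Fin 3 → ℝ) → ℂ} {x} (hg : DifferentiableAt ℂ g (S x))
    (hS : DifferentiableAt ℝ S x) (μ : Fin 3) :
    pd μ (fun y => g (S y)) x = deriv g (S x) * pd μ S x := by
  have h1 : HasFDerivAt g ((ContinuousLinearMap.smulRight (1 : ℂ →L[ℂ] ℂ)
      (deriv g (S x))).restrictScalars ℝ) (S x) :=
    (hg.hasDerivAt.hasFDerivAt).restrictScalars ℝ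
  have h2 := h1.comp x hS.hasFDerivAt
  unfold pd
  rw [show (fun y => g (S y)) = g ∘ S from rfl, h2.fderiv]
  simp [mul_comm]

noncomputable def gfun (j : ℕ) : ℂ → ℂ := fun s =>
  (∑ n ∈ Finset.range j, gammaCoeff j n * s ^ n) / (1 + s) ^ (j + 1)

lemma gfun_diff {j : ℕ} {s : ℂ} (hs : (1 : ℂ) + s ≠ 0) : DifferentiableAt ℂ (gfun j) s := by
  unfold gfun
  apply DifferentiableAt.div
  · exact DifferentiableAt.fun_sum fun n _ => (differentiableAt_const _).mul (differentiableAt_pow n)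
  · exact ((differentiableAt_const _).add differentiableAt_id).pow _
  · exact pow_ne_zero _ hs

/-- For a solution of the `CP¹` submodel `□u = 0`, `⟨∂u,∂u⟩ = 0`, the current
`J_μ^{(j,0)}` is conserved for all `j ≥ 1`. -/
theorem cp1_submodel_Jj0_conserved (u : (Fin 3 → ℝ) → ℂ) (hu : ContDiff ℝ (⊤ : ℕ∞) u)
    (hbox : ∀ x, dalembert u x = 0) (hnull : ∀ x, minkGrad u u x = 0)
    (j : ℕ) (hj : 1 ≤ j) :
    IsConservedCurrent (fun μ x =>
      -Complex.I * (Real.sqrt ((j : ℝ) * ((j : ℝ) + 1)) : ℂ) *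
        ((conj (u x) * pd μ u x - u x * pd μ (fun y => conj (u y)) x) /
          (1 + u x * conj (u x)) ^ (j + 1)) *
        ∑ n ∈ Finset.range j, gammaCoeff j n * (u x * conj (u x)) ^ n) := by
  intro x
  set c : ℂ := -Complex.I * (Real.sqrt ((j : ℝ) * ((j : ℝ) + 1)) : ℂ) with hc
  have hud : Differentiable ℝ u := hu.differentiable (by simp)
  have hv : ContDiff ℝ (⊤ : ℕ∞) (fun y => conj (u y)) := contDiff_conj hu
  have hvd : Differentiable ℝ (fun y => conj (u y)) := hv.differentiable (by simp)
  have hdu : ∀ μ, Differentiable ℝ (pd μ u) := fun μ => (pd_contDiff hu μ).differentiable (by simp)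
  have hdv : ∀ μ, Differentiable ℝ (pd μ (fun y => conj (u y))) := fun μ =>
    (pd_contDiff hv μ).differentiable (by simp)
  have hpdv : ∀ μ y, pd μ (fun z => conj (u z)) y = conj (pd μ u y) := fun μ y =>
    pd_conj (hud y) μ
  have hpdpdv : ∀ μ, pd μ (pd μ (fun z => conj (u z))) x = conj (pd μ (pd μ u) x) := by
    intro μ
    rw [show pd μ (fun z => conj (u z)) = fun y => conj (pd μ u y) from funext (hpdv μ)]
    exact pd_conj (hdu μ x) μ
  -- the scalar function S = |u|²
  set S : (Fin 3 → ℝ) → ℂ := fun y => u y * conj (u y) with hS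
  have hSd : Differentiable ℝ S := hud.mul hvd
  have hSx : (1 : ℂ) + S x ≠ 0 := by
    have h1 : S x = (Complex.normSq (u x) : ℂ) := Complex.mul_conj _
    rw [h1]
    have ht : (0 : ℝ) < 1 + Complex.normSq (u x) := by
      have := Complex.normSq_nonneg (u x); linarith
    intro h
    have h2 : ((1 + Complex.normSq (u x) : ℝ) : ℂ) = 0 := by push_cast; linear_combination h
    exact ht.ne' (by exact_mod_cast h2)
  have hgd : DifferentiableAt ℂ (gfun j) (S x) := gfun_diff hSx
  have hgSd : DifferentiableAt ℝ (fun y => gfun j (S y)) x := by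
    have h1 : HasFDerivAt (gfun j) ((ContinuousLinearMap.smulRight (1 : ℂ →L[ℂ] ℂ)
        (deriv (gfun j) (S x))).restrictScalars ℝ) (S x) :=
      (hgd.hasDerivAt.hasFDerivAt).restrictScalars ℝ
    exact (h1.comp x (hSd x).hasFDerivAt).differentiableAt
  -- the numerator P μ
  have hPd : ∀ μ, DifferentiableAt ℝ
      (fun y => conj (u y) * pd μ u y - u y * pd μ (fun z => conj (u z)) y) x := fun μ =>
    ((hvd x).mul (hdu μ x)).sub ((hud x).mul (hdv μ x))
  -- rewrite J μ
  have hrw : ∀ μ : Fin 3, (fun y =>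
      c * ((conj (u y) * pd μ u y - u y * pd μ (fun z => conj (u z)) y) /
        (1 + u y * conj (u y)) ^ (j + 1)) *
        ∑ n ∈ Finset.range j, gammaCoeff j n * (u y * conj (u y)) ^ n) =
      (fun y => c * (gfun j (S y) *
        (conj (u y) * pd μ u y - u y * pd μ (fun z => conj (u z)) y))) := by
    intro μ
    funext y
    simp only [hS, gfun]
    ring
  -- compute each divergence term
  have hterm : ∀ μ : Fin 3, pd μ (fun y => c * (gfun j (S y) *
      (conj (u y) * pd μ u y - u y * pd μ (fun z => conj (u z)) y))) x =
      c * (deriv (gfun j) (S x) * (pd μ u x * conj (u x) + u x * conj (pd μ u x)) *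
        (conj (u x) * pd μ u x - u x * conj (pd μ u x)) +
      gfun j (S x) * (conj (pd μ u x) * pd μ u x + conj (u x) * pd μ (pd μ u) x -
        (pd μ u x * conj (pd μ u x) + u x * conj (pd μ (pd μ u) x)))) := by
    intro μ
    rw [pd_const_mul (hgSd.fun_mul (hPd μ)) c μ, pd_mul hgSd (hPd μ) μ,
      pd_comp_deriv hgd (hSd x) μ,
      pd_sub ((hvd x).fun_mul (hdu μ x)) ((hud x).fun_mul (hdv μ x)) μ,
      pd_mul (hvd x) (hdu μ x) μ, pd_mul (hud x) (hdv μ x) μ]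
    have hSpd : pd μ S x = pd μ u x * conj (u x) + u x * conj (pd μ u x) := by
      rw [hS, pd_mul (hud x) (hvd x) μ, hpdv μ x]
    rw [hSpd, hpdv μ x, hpdpdv μ]
  beta_reduce
  rw [hrw 0, hrw 1, hrw 2, hterm 0, hterm 1, hterm 2]
  have hM : pd 0 u x * pd 0 u x - pd 1 u x * pd 1 u x - pd 2 u x * pd 2 u x = 0 := hnull x
  have hB : pd 0 (pd 0 u) x - pd 1 (pd 1 u) x - pd 2 (pd 2 u) x = 0 := hbox x
  have hMc : conj (pd 0 u x) * conj (pd 0 u x) - conj (pd 1 u x) * conj (pd 1 u x) -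
      conj (pd 2 u x) * conj (pd 2 u x) = 0 := by
    have := congrArg conj hM
    simpa using this
  have hBc : conj (pd 0 (pd 0 u) x) - conj (pd 1 (pd 1 u) x) - conj (pd 2 (pd 2 u) x) = 0 := by
    have := congrArg conj hB
    simpa using this
  linear_combination (c * deriv (gfun j) (S x) * (conj (u x)) ^ 2) * hM -
    (c * deriv (gfun j) (S x) * (u x) ^ 2) * hMc +
    (c * gfun j (S x) * conj (u x)) * hB - (c * gfun j (S x) * u x) * hBc
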